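/- arXiv:0904.1923 — 2 statements merged into one kernel-verified Lean document; each statement's English description precedes it below -/
import Mathlib

section
/- Let G = (V,E) be a finite simple graph and v a vertex of G. If M is a module of G with v ∉ M, then M is also a module of G*v. -/
/-
For distinct `z, m` with `m ≠ v`, adjacency in `G*v` is determined by the `G`-adjacencies
`z ~ m`, `v ~ z` and `v ~ m`. If `M` is a module avoiding `v` and `z ∉ M`, both `z ~ m` and
`v ~ m` are constant as `m` ranges over `M`, hence so is `z ~ m` in `G*v`.
-/

universe u

/-- The Seidel complement of `G` at `v`: adjacency between the open neighborhood of `v`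
and the set of vertices different from `v` and not adjacent to `v` is complemented,
all other adjacencies are unchanged. -/
def seidelCompl {V : Type u} (G : SimpleGraph V) (v : V) : SimpleGraph V where
  Adj x y := x ≠ y ∧
    Xor' (G.Adj x y)
      ((G.Adj v x ∧ ¬ G.Adj v y ∧ y ≠ v) ∨ (G.Adj v y ∧ ¬ G.Adj v x ∧ x ≠ v))
  symm := ⟨by
    rintro x y ⟨hxy, h⟩
    refine ⟨hxy.symm, ?_⟩
    have h1 : G.Adj x y ↔ G.Adj y x := G.adj_comm x y
    unfold Xor' at h ⊢
    unfold Xor at h ⊢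
    tauto⟩
  loopless := ⟨fun x h => h.1 rfl⟩

/-- `M` is a module of `G`: every vertex outside `M` is adjacent either to all
vertices of `M` or to none of them. -/
def IsModule {V : Type u} (G : SimpleGraph V) (M : Set V) : Prop :=
  ∀ z ∉ M, (∀ m ∈ M, G.Adj z m) ∨ (∀ m ∈ M, ¬ G.Adj z m)

/-- `G` is prime w.r.t. modular decomposition: every module is trivial. -/
def IsPrime {V : Type u} (G : SimpleGraph V) : Prop :=
  ∀ M : Set V, IsModule G M → M = ∅ ∨ (∃ x, M = {x}) ∨ M = Set.univ

variable {V : Type u}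

theorem isModule_iff_adj_iff (G : SimpleGraph V) (M : Set V) :
    IsModule G M ↔ ∀ z ∉ M, ∀ m₁ ∈ M, ∀ m₂ ∈ M, (G.Adj z m₁ ↔ G.Adj z m₂) := by
  refine ⟨fun hM z hz m₁ h₁ m₂ h₂ => ?_, fun h z hz => ?_⟩
  · rcases hM z hz with hall | hnone
    · exact iff_of_true (hall m₁ h₁) (hall m₂ h₂)
    · exact iff_of_false (hnone m₁ h₁) (hnone m₂ h₂)
  · by_cases hadj : ∃ m₀ ∈ M, G.Adj z m₀
    · obtain ⟨m₀, h₀, hz₀⟩ := hadj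
      exact .inl fun m hm => (h z hz m₀ h₀ m hm).1 hz₀
    · exact .inr fun m hm hzm => hadj ⟨m, hm, hzm⟩

theorem seidelCompl_adj_congr_right {G : SimpleGraph V} {v x y₁ y₂ : V}
    (hxy₁ : x ≠ y₁) (hxy₂ : x ≠ y₂) (hy₁ : y₁ ≠ v) (hy₂ : y₂ ≠ v)
    (hx : G.Adj x y₁ ↔ G.Adj x y₂) (hv : G.Adj v y₁ ↔ G.Adj v y₂) :
    (seidelCompl G v).Adj x y₁ ↔ (seidelCompl G v).Adj x y₂ := by
  simp only [seidelCompl, hx, hv, hxy₁, hxy₂, hy₁, hy₂, ne_eq, not_false_eq_true, true_and]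

theorem isModule_seidelCompl_of_not_mem_general {V : Type u} (G : SimpleGraph V)
    (v : V) (M : Set V) (hM : IsModule G M) (hv : v ∉ M) :
    IsModule (seidelCompl G v) M := by
  rw [isModule_iff_adj_iff] at hM ⊢
  intro z hz m₁ h₁ m₂ h₂
  have z_ne {m : V} (hm : m ∈ M) : z ≠ m := fun h => hz (h ▸ hm)
  have ne_v {m : V} (hm : m ∈ M) : m ≠ v := fun h => hv (h ▸ hm)
  exact seidelCompl_adj_congr_right (z_ne h₁) (z_ne h₂) (ne_v h₁) (ne_v h₂)
    (hM z hz m₁ h₁ m₂ h₂) (hM v hv m₁ h₁ m₂ h₂)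

/-- A module of `G` avoiding `v` is also a module of `G*v`. -/
theorem isModule_seidelCompl_of_not_mem {V : Type u} [Fintype V] (G : SimpleGraph V)
    (v : V) (M : Set V) (hM : IsModule G M) (hv : v ∉ M) :
    IsModule (seidelCompl G v) M :=
  isModule_seidelCompl_of_not_mem_general G v M hM hv
end

section
/- For every n ≥ 1, the graph XF₅ⁿ is Seidel complement stable: for every vertex v of XF₅ⁿ, the graph (XF₅ⁿ)*v is isomorphic to XF₅ⁿ. -/
/-!
Add an isolated vertex `∗` to `XF₅ⁿ`: switching with respect to `{C, D}` turns it into the cycle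
`C_{n+6}` through `p₁, …, p_{n+1}, B, D, ∗, C, A`. For any graph `G`, switching `G + ∗` at the
neighbourhood of `v` yields `G*v + ∗` with `v` and `∗` exchanged. Switching at the neighbourhood
of a vertex isolates it and only depends on the switching class, so `G*v + ∗` and `G + ∗` are the
cycle switched at the neighbourhoods of two of its vertices; a rotation carries one to the other.
-/

universe u

/-- The graph `XF₅ⁿ`: vertices `A = inl 0`, `B = inl 1`, `C = inl 2`, `D = inl 3` and the
path vertices `p₁, …, p_{n+1}` (`pᵢ = inr (i-1)`). Its edges are exactly: the path edges
`pᵢ p_{i+1}`, the domination edges `C pᵢ` and `D pᵢ` for all `i`, and the edges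
`A D`, `A p₁`, `B C`, `B p_{n+1}`. -/
def XF5 (n : ℕ) : SimpleGraph (Fin 4 ⊕ Fin (n + 1)) :=
  SimpleGraph.fromRel fun x y =>
    match x, y with
    | Sum.inr i, Sum.inr j => (i : ℕ) + 1 = (j : ℕ)
    | Sum.inl a, Sum.inr i =>
        a = 2 ∨ a = 3 ∨ (a = 0 ∧ (i : ℕ) = 0) ∨ (a = 1 ∧ (i : ℕ) = n)
    | Sum.inl a, Sum.inl b => (a = 0 ∧ b = 3) ∨ (a = 1 ∧ b = 2)
    | _, _ => False

lemma Fin.val_sub_eq_one_iff {N : ℕ} {a b : Fin (N + 2)} :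
    (a - b).val = 1 ↔ a.val = b.val + 1 ∨ (a.val = 0 ∧ b.val = N + 1) := by
  have ha := a.isLt
  have hb := b.isLt
  rw [Fin.val_sub]
  rcases lt_or_ge (N + 2 - b.val + a.val) (N + 2) with h | h
  · rw [Nat.mod_eq_of_lt h]; omega
  · rw [Nat.mod_eq_sub_mod h,
      Nat.mod_eq_of_lt (show N + 2 - b.val + a.val - (N + 2) < N + 2 by omega)]
    omega

namespace SimpleGraph

variable {V W : Type*}

/-- Seidel switching with respect to `S`: adjacency across the cut `(S, Sᶜ)` is complemented. -/
def switch (G : SimpleGraph V) (S : Set V) : SimpleGraph V where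
  Adj x y := x ≠ y ∧ (G.Adj x y ↔ (x ∈ S ↔ y ∈ S))
  symm := ⟨fun x y h => ⟨h.1.symm, by rw [G.adj_comm, h.2]; tauto⟩⟩
  loopless := ⟨fun _ h => h.1 rfl⟩

@[simp]
lemma switch_adj {G : SimpleGraph V} {S : Set V} {x y : V} :
    (G.switch S).Adj x y ↔ x ≠ y ∧ (G.Adj x y ↔ (x ∈ S ↔ y ∈ S)) :=
  Iff.rfl

/-- Switching at the neighbourhood of `w` isolates `w`; without `w` this is the descendant at `w`
of the two-graph of `G`. -/
abbrev switchNeighbors (G : SimpleGraph V) (w : V) : SimpleGraph V :=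
  G.switch (G.neighborSet w)

lemma switchNeighbors_not_adj_left (G : SimpleGraph V) (w y : V) :
    ¬ (G.switchNeighbors w).Adj w y := by
  simp only [switch_adj, mem_neighborSet, G.irrefl]
  tauto

lemma switchNeighbors_not_adj_right (G : SimpleGraph V) (w x : V) :
    ¬ (G.switchNeighbors w).Adj x w :=
  fun h => G.switchNeighbors_not_adj_left w x h.symm

lemma switchNeighbors_switch (G : SimpleGraph V) (S : Set V) (w : V) :
    (G.switch S).switchNeighbors w = G.switchNeighbors w := by
  ext x y
  by_cases hx : x = w
  · subst hx; simp only [switchNeighbors_not_adj_left]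
  by_cases hy : y = w
  · subst hy; simp only [switchNeighbors_not_adj_right]
  simp only [switch_adj, mem_neighborSet, Ne.symm hx, Ne.symm hy, ne_eq, not_false_eq_true,
    true_and, and_congr_right_iff]
  tauto

def Iso.switchNeighbors {G : SimpleGraph V} {H : SimpleGraph W} (φ : G ≃g H) {w : V} {w' : W}
    (h : φ w = w') : G.switchNeighbors w ≃g H.switchNeighbors w' where
  toEquiv := φ.toEquiv
  map_rel_iff' {x y} := by
    subst h
    simp [φ.map_adj_iff]

def withIsolated (G : SimpleGraph V) : SimpleGraph (Option V) :=
  G.map Function.Embedding.some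

@[simp]
lemma withIsolated_adj_some {G : SimpleGraph V} {a b : V} :
    G.withIsolated.Adj (some a) (some b) ↔ G.Adj a b :=
  map_adj_apply (f := Function.Embedding.some)

@[simp]
lemma withIsolated_not_adj_none_left {G : SimpleGraph V} {x : Option V} :
    ¬ G.withIsolated.Adj none x := by
  rw [withIsolated, map_adj]
  simp

@[simp]
lemma withIsolated_not_adj_none_right {G : SimpleGraph V} {x : Option V} :
    ¬ G.withIsolated.Adj x none :=
  fun h => withIsolated_not_adj_none_left h.symm

lemma switchNeighbors_withIsolated_none (G : SimpleGraph V) :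
    G.withIsolated.switchNeighbors none = G.withIsolated := by
  ext x y
  simp only [switch_adj, mem_neighborSet, withIsolated_not_adj_none_left, iff_self, iff_true,
    and_iff_right_iff_imp]
  exact Adj.ne

def Iso.switchNeighborsOfSwitch {G : SimpleGraph V} {H : SimpleGraph W} {S : Set V}
    (φ : G.switch S ≃g H) {w : V} {w' : W} (h : φ w = w') :
    G.switchNeighbors w ≃g H.switchNeighbors w' where
  toEquiv := φ.toEquiv
  map_rel_iff' := by
    rw [← switchNeighbors_switch G S w]
    exact (φ.switchNeighbors h).map_rel_iff'

def Iso.ofWithIsolated {G : SimpleGraph V} {H : SimpleGraph W}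
    (φ : G.withIsolated ≃g H.withIsolated) (h : φ none = none) : G ≃g H where
  toEquiv := Equiv.removeNone φ.toEquiv
  map_rel_iff' {a b} := by
    have hsome (x : V) : some (Equiv.removeNone φ.toEquiv x) = φ (some x) :=
      Equiv.removeNone_some _ <| Option.ne_none_iff_exists'.mp fun hx =>
        Option.some_ne_none x (φ.injective (hx.trans h.symm))
    rw [← withIsolated_adj_some, ← withIsolated_adj_some (G := G), ← φ.map_adj_iff]
    exact Iff.of_eq (congrArg₂ _ (hsome a) (hsome b))

lemma circulantGraph_exists_iso_apply_eq {G : Type*} [AddGroup G] (s : Set G) (a b : G) :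
    ∃ σ : circulantGraph s ≃g circulantGraph s, σ a = b :=
  ⟨⟨Equiv.addRight (-a + b), circulantGraph_adj_translate⟩, by simp⟩

lemma cycleGraph_exists_iso_apply_eq {N : ℕ} (a b : Fin (N + 1)) :
    ∃ σ : cycleGraph (N + 1) ≃g cycleGraph (N + 1), σ a = b := by
  rw [cycleGraph_eq_circulantGraph]
  exact circulantGraph_exists_iso_apply_eq _ a b

lemma cycleGraph_adj_iff_val {N : ℕ} {a b : Fin (N + 2)} :
    (cycleGraph (N + 2)).Adj a b ↔ a.val = b.val + 1 ∨ b.val = a.val + 1 ∨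
      (a.val = 0 ∧ b.val = N + 1) ∨ (b.val = 0 ∧ a.val = N + 1) := by
  rw [cycleGraph_adj', Fin.val_sub_eq_one_iff, Fin.val_sub_eq_one_iff]
  tauto

end SimpleGraph

open SimpleGraph

lemma seidelCompl_adj {V : Type u} {G : SimpleGraph V} {v x y : V} :
    (seidelCompl G v).Adj x y ↔ x ≠ y ∧ (G.Adj x y ↔
      ¬((G.Adj v x ∧ ¬G.Adj v y ∧ y ≠ v) ∨ (G.Adj v y ∧ ¬G.Adj v x ∧ x ≠ v))) :=
  and_congr_right fun _ => xor_iff_iff_not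

/-- The added vertex `none` takes over the role of `v`, which becomes isolated. -/
def withIsolatedSwitchNeighborsSomeIso {V : Type u} [DecidableEq V] (G : SimpleGraph V) (v : V) :
    G.withIsolated.switchNeighbors (some v) ≃g (seidelCompl G v).withIsolated where
  toEquiv := Equiv.swap none (some v)
  map_rel_iff' {x y} := by
    rcases x with _ | a <;> rcases y with _ | b
    · simp
    · by_cases hb : b = v
      · subst hb; simp
      · simp [Equiv.swap_apply_of_ne_of_ne, hb, seidelCompl_adj, Ne.symm hb]
    · by_cases ha : a = v
      · subst ha; simp
      · simp [Equiv.swap_apply_of_ne_of_ne, ha, seidelCompl_adj, G.adj_comm a v]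
    · by_cases ha : a = v <;> by_cases hb : b = v
      · subst ha hb; simp
      · subst ha; simp [Equiv.swap_apply_of_ne_of_ne, hb]
      · subst hb; simp [Equiv.swap_apply_of_ne_of_ne, ha, G.adj_comm a b]
      · simp only [Equiv.swap_apply_of_ne_of_ne, ha, hb, ne_eq, reduceCtorEq, not_false_eq_true,
          Option.some.injEq, withIsolated_adj_some, seidelCompl_adj, switch_adj, mem_neighborSet]
        tauto

theorem nonempty_seidelCompl_iso_of_switch_withIsolated_iso {V : Type u} {W : Type*}
    [DecidableEq V] (G : SimpleGraph V) {H : SimpleGraph W} {S : Set (Option V)}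
    (e : G.withIsolated.switch S ≃g H) (hH : ∀ a b : W, ∃ σ : H ≃g H, σ a = b) (v : V) :
    Nonempty (seidelCompl G v ≃g G) := by
  obtain ⟨σ, hσ⟩ := hH (e (some v)) (e none)
  have : ∃ ψ : (seidelCompl G v).withIsolated ≃g G.withIsolated.switchNeighbors none,
      ψ none = none :=
    ⟨(withIsolatedSwitchNeighborsSomeIso G v).symm.trans <|
      (e.switchNeighborsOfSwitch rfl).trans <|
      (σ.switchNeighbors hσ).trans (e.switchNeighborsOfSwitch rfl).symm, by
        change e.symm (σ (e (Equiv.swap none (some v) none))) = none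
        simp [hσ]⟩
  rw [switchNeighbors_withIsolated_none] at this
  obtain ⟨ψ, hψ⟩ := this
  exact ⟨ψ.ofWithIsolated hψ⟩

open Sum

section XF5
variable {n : ℕ}

@[simp]
lemma XF5_adj_inl_inl {a b : Fin 4} :
    (XF5 n).Adj (inl a) (inl b) ↔
      a = 0 ∧ b = 3 ∨ a = 3 ∧ b = 0 ∨ a = 1 ∧ b = 2 ∨ a = 2 ∧ b = 1 := by
  fin_cases a <;> fin_cases b <;> simp [XF5]

@[simp]
lemma XF5_adj_inl_inr {a : Fin 4} {i : Fin (n + 1)} :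
    (XF5 n).Adj (inl a) (inr i) ↔ a = 2 ∨ a = 3 ∨ a = 0 ∧ i.val = 0 ∨ a = 1 ∧ i.val = n := by
  simp [XF5]

@[simp]
lemma XF5_adj_inr_inl {a : Fin 4} {i : Fin (n + 1)} :
    (XF5 n).Adj (inr i) (inl a) ↔ a = 2 ∨ a = 3 ∨ a = 0 ∧ i.val = 0 ∨ a = 1 ∧ i.val = n := by
  rw [adj_comm, XF5_adj_inl_inr]

@[simp]
lemma XF5_adj_inr_inr {i j : Fin (n + 1)} :
    (XF5 n).Adj (inr i) (inr j) ↔ i.val + 1 = j.val ∨ j.val + 1 = i.val := by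
  simp only [XF5, fromRel_adj, ne_eq, inr.injEq, Fin.ext_iff]
  omega

end XF5

def xf5CyclePosition (n : ℕ) : Option (Fin 4 ⊕ Fin (n + 1)) → Fin (n + 6)
  | none => ⟨n + 3, by omega⟩
  | some (inl a) => ⟨![n + 5, n + 1, n + 4, n + 2] a, by fin_cases a <;> simp⟩
  | some (inr i) => ⟨i, by omega⟩

lemma xf5CyclePosition_bijective (n : ℕ) : Function.Bijective (xf5CyclePosition n) := by
  refine (Fintype.bijective_iff_injective_and_card _).mpr ⟨?_, by
    simp only [Fintype.card_option, Fintype.card_sum, Fintype.card_fin]; omega⟩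
  rintro (_ | a | i) (_ | b | j) h <;> (try fin_cases a) <;> (try fin_cases b) <;>
    simp [xf5CyclePosition, Fin.ext_iff] at h ⊢ <;> omega

noncomputable def xf5SwitchIsoCycle (n : ℕ) :
    (XF5 n).withIsolated.switch {some (inl 2), some (inl 3)} ≃g cycleGraph (n + 6) where
  toEquiv := Equiv.ofBijective _ (xf5CyclePosition_bijective n)
  map_rel_iff' {x y} := by
    rcases x with _ | a | i <;> rcases y with _ | b | j <;> (try fin_cases a) <;>
      (try fin_cases b) <;>
      simp [cycleGraph_adj_iff_val, xf5CyclePosition, Fin.ext_iff, -Fin.val_eq_zero_iff] <;> omega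

theorem xf5_seidel_stable_general (n : ℕ) (v : Fin 4 ⊕ Fin (n + 1)) :
    Nonempty (seidelCompl (XF5 n) v ≃g XF5 n) :=
  nonempty_seidelCompl_iso_of_switch_withIsolated_iso (XF5 n) (xf5SwitchIsoCycle n)
    cycleGraph_exists_iso_apply_eq v

/-- For every `n ≥ 1` the graph `XF₅ⁿ` is Seidel complement stable:
`(XF₅ⁿ)*v ≅ XF₅ⁿ` for every vertex `v`. -/
theorem xf5_seidel_stable (n : ℕ) (hn : 1 ≤ n) (v : Fin 4 ⊕ Fin (n + 1)) :
    Nonempty (seidelCompl (XF5 n) v ≃g XF5 n) :=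
  xf5_seidel_stable_general n v
end
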